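/- If R is a decomposable symmetric relation on distributions that is preserved by convex combinations (μ₁ R ν₁ and μ₂ R ν₂ imply (μ₁ ⊕_r μ₂) R (ν₁ ⊕_r ν₂)) and satisfies the state-based transfer condition (δ(E) R δ(F) and E →α μ' imply δ(F) →α ν' with μ' R ν'), then R is contained in strong probabilistic bisimilarity. -/

import Mathlib

open scoped BigOperators
open Classical

namespace PBB

structure Distr (X : Type) where
  f : X → ℝ
  nonneg : ∀ x, 0 ≤ f x
  fin : (Function.support f).Finite
  sum_one : ∑ᶠ x, f x = 1

namespace Distr

variable {X : Type}

noncomputable def dirac (E : X) : Distr X where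
  f := fun x => if x = E then 1 else 0
  nonneg := fun x => by by_cases h : x = E <;> simp [h]
  fin := Set.Finite.subset (Set.finite_singleton E) (by
    intro x hx
    simp only [Function.mem_support] at hx
    by_contra h
    simp only [Set.mem_singleton_iff] at h
    simp [h] at hx)
  sum_one := by
    rw [finsum_eq_single _ E (by intro x hx; simp [hx])]
    simp

noncomputable def mix (r : ℝ) (h0 : 0 ≤ r) (h1 : r ≤ 1) (μ ν : Distr X) : Distr X where
  f := fun x => r * μ.f x + (1 - r) * ν.f x
  nonneg := fun x =>
    add_nonneg (mul_nonneg h0 (μ.nonneg x)) (mul_nonneg (by linarith) (ν.nonneg x))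
  fin := Set.Finite.subset (μ.fin.union ν.fin) (by
    intro x hx
    simp only [Function.mem_support] at hx
    by_contra h
    simp only [Set.mem_union, Function.mem_support, not_or, not_not] at h
    simp [h.1, h.2] at hx)
  sum_one := by
    have hf : (Function.support fun x => r * μ.f x).Finite :=
      Set.Finite.subset μ.fin (by
        intro x hx
        simp only [Function.mem_support] at hx ⊢
        intro h; simp [h] at hx)
    have hg : (Function.support fun x => (1 - r) * ν.f x).Finite :=
      Set.Finite.subset ν.fin (by
        intro x hx
        simp only [Function.mem_support] at hx ⊢
        intro h; simp [h] at hx)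
    rw [finsum_add_distrib hf hg, ← mul_finsum _ _, ← mul_finsum _ _,
      μ.sum_one, ν.sum_one]
    ring

end Distr

def IsMix {X : Type} (r : ℝ) (μ ν ξ : Distr X) : Prop :=
  ∀ x, ξ.f x = r * μ.f x + (1 - r) * ν.f x

def IsCombo {X I : Type} [Fintype I] (p : I → ℝ) (μs : I → Distr X) (ξ : Distr X) : Prop :=
  (∀ i, 0 ≤ p i) ∧ (∑ i, p i = 1) ∧ ∀ x, ξ.f x = ∑ i, p i * (μs i).f x

/-! ### The probabilistic process calculus -/

mutual
/-- Non-deterministic processes: `E ::= 0 | α.P | E + E`. -/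
inductive PE (Act : Type) : Type where
  | zero : PE Act
  | pre : Act → PP Act → PE Act
  | plus : PE Act → PE Act → PE Act

/-- Probabilistic processes: `P ::= ∂(E) | P ⊕_r P` with `r ∈ (0,1)`. -/
inductive PP (Act : Type) : Type where
  | dirac : PE Act → PP Act
  | pchoice : PP Act → (r : ℝ) → 0 < r → r < 1 → PP Act → PP Act
end

variable {Act : Type}

/-- The distribution `⟦P⟧` denoted by a probabilistic process. -/
noncomputable def den : PP Act → Distr (PE Act)
  | .dirac E => Distr.dirac E
  | .pchoice P r h0 h1 Q => Distr.mix r h0.le h1.le (den P) (den Q)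

/-- The transition relation `E →α μ` on non-deterministic processes. -/
inductive pstep : PE Act → Act → Distr (PE Act) → Prop where
  | pre (α : Act) (P : PP Act) : pstep (.pre α P) α (den P)
  | left {E₁ E₂ : PE Act} {α : Act} {μ : Distr (PE Act)} :
      pstep E₁ α μ → pstep (.plus E₁ E₂) α μ
  | right {E₁ E₂ : PE Act} {α : Act} {μ : Distr (PE Act)} :
      pstep E₂ α μ → pstep (.plus E₁ E₂) α μ

/-- The (combined) transition relation `μ →α μ'` on distributions. -/
def dstep (μ : Distr (PE Act)) (α : Act) (μ' : Distr (PE Act)) : Prop :=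
  ∃ (I : Type) (_ : Fintype I) (p : I → ℝ) (Es : I → PE Act) (μs : I → Distr (PE Act)),
    IsCombo p (fun i => Distr.dirac (Es i)) μ ∧ IsCombo p μs μ' ∧
    ∀ i, pstep (Es i) α (μs i)

variable (τ : Act)

/-- The partial silent step `μ →(τ) μ'`. -/
def ptau (μ μ' : Distr (PE Act)) : Prop :=
  dstep μ τ μ' ∨
  ∃ (s : ℝ) (μ₁ μ₂ μ₁' : Distr (PE Act)), 0 ≤ s ∧ s ≤ 1 ∧
    IsMix s μ₁ μ₂ μ ∧ IsMix s μ₁' μ₂ μ' ∧ dstep μ₁ τ μ₁'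

/-- `μ ⟹ μ'`: the reflexive-transitive closure of `→(τ)`. -/
def wtau : Distr (PE Act) → Distr (PE Act) → Prop :=
  Relation.ReflTransGen (ptau τ)

/-- The optional step `μ →(α) μ'`. -/
def optStep (μ : Distr (PE Act)) (α : Act) (μ' : Distr (PE Act)) : Prop :=
  dstep μ α μ' ∨ (α = τ ∧ ptau τ μ μ')

/-- Weak decomposability of a relation on distributions. -/
def WeaklyDecomposable (R : Distr (PE Act) → Distr (PE Act) → Prop) : Prop :=
  ∀ (I : Type) (_ : Fintype I) (p : I → ℝ) (μs : I → Distr (PE Act))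
    (μ ν : Distr (PE Act)),
    R μ ν → IsCombo p μs μ →
    ∃ (ν' : Distr (PE Act)) (νs : I → Distr (PE Act)),
      wtau τ ν ν' ∧ R μ ν' ∧ IsCombo p νs ν' ∧ ∀ i, R (μs i) (νs i)

/-- Decomposability of a relation on distributions. -/
def Decomposable (R : Distr (PE Act) → Distr (PE Act) → Prop) : Prop :=
  ∀ (I : Type) (_ : Fintype I) (p : I → ℝ) (μs : I → Distr (PE Act))
    (μ ν : Distr (PE Act)),
    R μ ν → IsCombo p μs μ →
    ∃ νs : I → Distr (PE Act), IsCombo p νs ν ∧ ∀ i, R (μs i) (νs i)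

/-- Branching probabilistic bisimulation relations. -/
def IsBranchingBisim (R : Distr (PE Act) → Distr (PE Act) → Prop) : Prop :=
  Symmetric R ∧ WeaklyDecomposable τ R ∧
  ∀ μ ν α μ', R μ ν → dstep μ α μ' →
    ∃ ν' ν'', wtau τ ν ν' ∧ optStep τ ν' α ν'' ∧ R μ ν' ∧ R μ' ν''

/-- Branching probabilistic bisimilarity `≈_b`. -/
def bb (μ ν : Distr (PE Act)) : Prop :=
  ∃ R, IsBranchingBisim τ R ∧ R μ ν

/-- Strong probabilistic bisimulation relations. -/
def IsStrongBisim (R : Distr (PE Act) → Distr (PE Act) → Prop) : Prop :=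
  Symmetric R ∧ Decomposable R ∧
  ∀ μ ν α μ', R μ ν → dstep μ α μ' →
    ∃ ν', dstep ν α ν' ∧ R μ' ν'

/-- Strong probabilistic bisimilarity `∼`. -/
def sb (μ ν : Distr (PE Act)) : Prop :=
  ∃ R, IsStrongBisim R ∧ R μ ν

/-- Rooted branching probabilistic bisimulation relations. -/
def IsRootedBranchingBisim (R : Distr (PE Act) → Distr (PE Act) → Prop) : Prop :=
  Symmetric R ∧ Decomposable R ∧
  ∀ μ ν α μ', R μ ν → dstep μ α μ' →
    ∃ ν', dstep ν α ν' ∧ bb τ μ' ν'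

/-- Rooted branching probabilistic bisimilarity `≈_rb`. -/
def rbb (μ ν : Distr (PE Act)) : Prop :=
  ∃ R, IsRootedBranchingBisim τ R ∧ R μ ν

/-- `≈_b`-stability of a distribution. -/
def Stable (μ : Distr (PE Act)) : Prop :=
  ∀ μ', wtau τ μ μ' → bb τ μ μ' → μ' = μ

/-- A state is rigid iff it admits no inert `τ`-transition. -/
def Rigid (E : PE Act) : Prop :=
  ¬ ∃ μ, pstep E τ μ ∧ bb τ (Distr.dirac E) μ

/-- `E ⊑ P`: every transition of `E` is matched by an optional transition of `⟦P⟧`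
with branching probabilistically bisimilar target. -/
def sq (E : PE Act) (P : PP Act) : Prop :=
  ∀ α μ, pstep E α μ → ∃ ν, optStep τ (den P) α ν ∧ bb τ μ ν

/-!
`R` is itself a strong bisimulation. A combined transition `μ →α μ'` splits `μ` as
`⊕ᵢ pᵢ·δ(Eᵢ)` with `Eᵢ →α μᵢ'`, and decomposability splits `ν` accordingly as `⊕ᵢ pᵢ·νᵢ`
with `δ(Eᵢ) R νᵢ`. Decomposing once more along the support of `νᵢ` gives `δ(Eᵢ) R δ(F)` for
each `F` in that support, since a convex combination equal to a Dirac distribution has only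
that Dirac distribution as components of positive weight. The state-based transfer condition
then provides moves `δ(F) →α θ_F` with `μᵢ' R θ_F`, and these reassemble into a move of `ν`;
closure of `R` under binary mixtures extends by induction to finite convex combinations,
which gives `μ' R ν'`.
-/

namespace Distr

variable {X : Type}

theorem ext_f {μ ν : Distr X} (h : ∀ x, μ.f x = ν.f x) : μ = ν := by
  cases μ; cases ν
  congr
  exact funext h

noncomputable def combo {I : Type} [Fintype I] (p : I → ℝ) (hp : ∀ i, 0 ≤ p i)
    (hs : ∑ i, p i = 1) (μs : I → Distr X) : Distr X where
  f x := ∑ i, p i * (μs i).f x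
  nonneg x := Finset.sum_nonneg fun i _ => mul_nonneg (hp i) ((μs i).nonneg x)
  fin := Function.HasFiniteSupport.sum (fun i => ((μs i).fin.subset
    (Function.support_mul_subset_right _ _))) _
  sum_one := by
    rw [finsum_sum_comm _ _ fun i _ => (μs i).fin.subset (Function.support_mul_subset_right _ _)]
    simp only [← mul_finsum, sum_one, mul_one, hs]

end Distr

section Combo

variable {X I : Type} [Fintype I]

theorem isCombo_combo {p : I → ℝ} (hp : ∀ i, 0 ≤ p i) (hs : ∑ i, p i = 1)
    (μs : I → Distr X) : IsCombo p μs (Distr.combo p hp hs μs) :=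
  ⟨hp, hs, fun _ => rfl⟩

theorem isCombo_const {p : I → ℝ} (hp : ∀ i, 0 ≤ p i) (hs : ∑ i, p i = 1) (μ : Distr X) :
    IsCombo p (fun _ => μ) μ :=
  ⟨hp, hs, fun x => by rw [← Finset.sum_mul, hs, one_mul]⟩

theorem isCombo_dirac_support (ξ : Distr X) :
    IsCombo (fun x : ξ.fin.toFinset => ξ.f x) (fun x => Distr.dirac x.1) ξ := by
  refine ⟨fun x => ξ.nonneg x, ?_, fun x => ?_⟩
  · rw [Finset.sum_coe_sort ξ.fin.toFinset ξ.f, ← finsum_eq_sum ξ.f ξ.fin, ξ.sum_one]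
  · simp only [Distr.dirac, mul_ite, mul_one, mul_zero]
    rw [Finset.sum_coe_sort ξ.fin.toFinset (fun y => if x = y then ξ.f y else 0),
      Finset.sum_ite_eq]
    split_ifs with hx
    · rfl
    · simpa using hx

theorem IsCombo.comp_equiv {J : Type} [Fintype J] {p : I → ℝ} {μs : I → Distr X}
    {μ : Distr X} (h : IsCombo p μs μ) (e : J ≃ I) : IsCombo (p ∘ e) (μs ∘ e) μ :=
  ⟨fun j => h.1 (e j), by rw [← h.2.1]; exact e.sum_comp p,
    fun x => by rw [h.2.2 x]; exact (e.sum_comp fun i => p i * (μs i).f x).symm⟩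

theorem IsCombo.sigma {J : I → Type} [∀ i, Fintype (J i)] {p : I → ℝ} {q : ∀ i, J i → ℝ}
    {νs : I → Distr X} {ξs : ∀ i, J i → Distr X} {ν : Distr X}
    (hν : IsCombo p νs ν) (hξ : ∀ i, IsCombo (q i) (ξs i) (νs i)) :
    IsCombo (fun k : Σ i, J i => p k.1 * q k.1 k.2) (fun k => ξs k.1 k.2) ν := by
  refine ⟨fun k => mul_nonneg (hν.1 k.1) ((hξ k.1).1 k.2), ?_, fun x => ?_⟩
  · rw [← Finset.univ_sigma_univ, Finset.sum_sigma]
    simp only [← Finset.mul_sum, (hξ _).2.1, mul_one, hν.2.1]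
  · rw [hν.2.2 x, ← Finset.univ_sigma_univ, Finset.sum_sigma]
    simp only [(hξ _).2.2 x, Finset.mul_sum, mul_assoc]

theorem IsCombo.eq_of_weight_eq_one {p : I → ℝ} {μs : I → Distr X} {μ : Distr X}
    (h : IsCombo p μs μ) {i : I} (hi : p i = 1) : μ = μs i := by
  classical
  have hrest : ∀ j ∈ Finset.univ.erase i, p j = 0 := by
    have hsum : ∑ j ∈ Finset.univ.erase i, p j = 0 := by
      have := Finset.add_sum_erase Finset.univ p (Finset.mem_univ i)
      linarith [h.2.1]
    exact (Finset.sum_eq_zero_iff_of_nonneg fun j _ => h.1 j).1 hsum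
  refine Distr.ext_f fun x => ?_
  rw [h.2.2 x, Finset.sum_eq_single i (fun j _ hj => by
    rw [hrest j (Finset.mem_erase.2 ⟨hj, Finset.mem_univ j⟩), zero_mul]) (by simp), hi, one_mul]

theorem IsCombo.eq_dirac {p : I → ℝ} {ρs : I → Distr X} {E : X}
    (h : IsCombo p ρs (Distr.dirac E)) {i : I} (hi : p i ≠ 0) : ρs i = Distr.dirac E := by
  have hzero : ∀ x, x ≠ E → (ρs i).f x = 0 := by
    intro x hx
    have hsum : ∑ j, p j * (ρs j).f x = 0 := by
      rw [← h.2.2 x]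
      simp [Distr.dirac, hx]
    have := (Finset.sum_eq_zero_iff_of_nonneg fun j _ => mul_nonneg (h.1 j)
      ((ρs j).nonneg x)).1 hsum i (Finset.mem_univ i)
    exact (mul_eq_zero.1 this).resolve_left hi
  have hone : (ρs i).f E = 1 := by
    rw [← (ρs i).sum_one, finsum_eq_single _ E hzero]
  refine Distr.ext_f fun x => ?_
  by_cases hx : x = E
  · simp [Distr.dirac, hx, hone]
  · simp [Distr.dirac, hx, hzero x hx]

end Combo

section Mix

variable {X : Type}

def MixClosed (R : Distr X → Distr X → Prop) : Prop :=
  ∀ (r : ℝ), 0 ≤ r → r ≤ 1 → ∀ μ₁ μ₂ ν₁ ν₂ μ ν : Distr X,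
    R μ₁ ν₁ → R μ₂ ν₂ → IsMix r μ₁ μ₂ μ → IsMix r ν₁ ν₂ ν → R μ ν

theorem IsCombo.isMix_tail {n : ℕ} {p : Fin (n + 1) → ℝ} {μs : Fin (n + 1) → Distr X}
    {μ ξ : Distr X} (h : IsCombo p μs μ) (h0 : p 0 < 1)
    (hξ : IsCombo (fun i : Fin n => p i.succ / (1 - p 0)) (fun i => μs i.succ) ξ) :
    IsMix (p 0) (μs 0) ξ μ := by
  intro x
  rw [h.2.2 x, Fin.sum_univ_succ, hξ.2.2 x, Finset.mul_sum]
  congr 1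
  refine Finset.sum_congr rfl fun i _ => ?_
  field_simp [(sub_pos.2 h0).ne']

theorem IsCombo.tail_weights {n : ℕ} {p : Fin (n + 1) → ℝ} {μs : Fin (n + 1) → Distr X}
    {μ : Distr X} (h : IsCombo p μs μ) (h0 : p 0 < 1) :
    (∀ i : Fin n, 0 ≤ p i.succ / (1 - p 0)) ∧ ∑ i : Fin n, p i.succ / (1 - p 0) = 1 := by
  have hpos : 0 < 1 - p 0 := sub_pos.2 h0
  refine ⟨fun i => div_nonneg (h.1 i.succ) hpos.le, ?_⟩
  rw [← Finset.sum_div, div_eq_one_iff_eq hpos.ne', ← h.2.1, Fin.sum_univ_succ]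
  ring

theorem MixClosed.isCombo_fin {R : Distr X → Distr X → Prop} (hR : MixClosed R) {n : ℕ}
    {p : Fin n → ℝ} {μs νs : Fin n → Distr X} {μ ν : Distr X}
    (hμ : IsCombo p μs μ) (hν : IsCombo p νs ν) (hRs : ∀ i, R (μs i) (νs i)) : R μ ν := by
  induction n generalizing μ ν with
  | zero => simpa using hμ.2.1
  | succ n ih =>
    -- if `p 0 = 1` the tail weights cannot be renormalised, but then `μ = μs 0`
    rcases (hμ.2.1 ▸ Finset.single_le_sum (fun i _ => hμ.1 i) (Finset.mem_univ 0)).lt_or_eq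
      with h0 | h0
    · obtain ⟨hq, hqs⟩ := hμ.tail_weights h0
      exact hR (p 0) (hμ.1 0) h0.le _ _ _ _ μ ν (hRs 0)
        (ih (isCombo_combo hq hqs _) (isCombo_combo hq hqs _) fun i => hRs i.succ)
        (hμ.isMix_tail h0 (isCombo_combo hq hqs _)) (hν.isMix_tail h0 (isCombo_combo hq hqs _))
    · rw [hμ.eq_of_weight_eq_one h0, hν.eq_of_weight_eq_one h0]
      exact hRs 0

theorem MixClosed.isCombo {R : Distr X → Distr X → Prop} (hR : MixClosed R)
    {I : Type} [Fintype I] {p : I → ℝ} {μs νs : I → Distr X} {μ ν : Distr X}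
    (hμ : IsCombo p μs μ) (hν : IsCombo p νs ν) (hRs : ∀ i, R (μs i) (νs i)) : R μ ν :=
  hR.isCombo_fin (hμ.comp_equiv (Fintype.equivFin I).symm)
    (hν.comp_equiv (Fintype.equivFin I).symm) fun _ => hRs _

end Mix

section Transfer

variable {Act : Type}

theorem dstep_of_isCombo {I : Type} [Fintype I] {p : I → ℝ} {νs θs : I → Distr (PE Act)}
    {ν θ : Distr (PE Act)} {α : Act} (hν : IsCombo p νs ν) (hθ : IsCombo p θs θ)
    (hsteps : ∀ i, dstep (νs i) α (θs i)) : dstep ν α θ := by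
  choose J _ q Fs ξs hsrc htgt hpstep using hsteps
  exact ⟨(Σ i, J i), inferInstance, fun k => p k.1 * q k.1 k.2, fun k => Fs k.1 k.2,
    fun k => ξs k.1 k.2, hν.sigma hsrc, hθ.sigma htgt, fun k => hpstep k.1 k.2⟩

theorem exists_dstep_of_rel_dirac {R : Distr (PE Act) → Distr (PE Act) → Prop}
    (hsym : Symmetric R) (hdec : Decomposable R) (hmix : MixClosed R)
    (htrans : ∀ (E F : PE Act) (α : Act) (μ' : Distr (PE Act)),
      R (Distr.dirac E) (Distr.dirac F) → pstep E α μ' →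
      ∃ ν', dstep (Distr.dirac F) α ν' ∧ R μ' ν')
    {E : PE Act} {ξ : Distr (PE Act)} {α : Act} {μ' : Distr (PE Act)}
    (hR : R (Distr.dirac E) ξ) (hstep : pstep E α μ') :
    ∃ ν', dstep ξ α ν' ∧ R μ' ν' := by
  have hξ := isCombo_dirac_support ξ
  obtain ⟨ρs, hρ, hRρ⟩ := hdec _ _ _ _ ξ _ (hsym hR) hξ
  have hRF : ∀ F : ξ.fin.toFinset, R (Distr.dirac E) (Distr.dirac F.1) := fun F =>
    hsym (hρ.eq_dirac (ξ.fin.mem_toFinset.1 F.2) ▸ hRρ F)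
  choose θs hθ hRθ using fun F => htrans E F.1 α μ' (hRF F) hstep
  exact ⟨_, dstep_of_isCombo hξ (isCombo_combo hξ.1 hξ.2.1 θs) hθ,
    hmix.isCombo (isCombo_const hξ.1 hξ.2.1 μ') (isCombo_combo hξ.1 hξ.2.1 θs) hRθ⟩

theorem isStrongBisim_of_rel_dirac {R : Distr (PE Act) → Distr (PE Act) → Prop}
    (hsym : Symmetric R) (hdec : Decomposable R) (hmix : MixClosed R)
    (htrans : ∀ (E F : PE Act) (α : Act) (μ' : Distr (PE Act)),
      R (Distr.dirac E) (Distr.dirac F) → pstep E α μ' →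
      ∃ ν', dstep (Distr.dirac F) α ν' ∧ R μ' ν') :
    IsStrongBisim R := by
  refine ⟨hsym, hdec, fun μ ν α μ' hR ⟨I, _, p, Es, μs, hsrc, htgt, hsteps⟩ => ?_⟩
  obtain ⟨νs, hν, hRs⟩ := hdec I _ p _ μ ν hR hsrc
  choose θs hθ hRθ using fun i =>
    exists_dstep_of_rel_dirac hsym hdec hmix htrans (hRs i) (hsteps i)
  exact ⟨_, dstep_of_isCombo hν (isCombo_combo hν.1 hν.2.1 θs) hθ,
    hmix.isCombo htgt (isCombo_combo hν.1 hν.2.1 θs) hRθ⟩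

end Transfer

/-- A decomposable symmetric relation preserved by convex combinations satisfying the
state-based transfer condition is contained in strong probabilistic bisimilarity. -/
theorem statement17 {Act : Type} (R : Distr (PE Act) → Distr (PE Act) → Prop)
    (hsym : Symmetric R) (hdec : Decomposable R)
    (hconv : ∀ (r : ℝ), 0 ≤ r → r ≤ 1 → ∀ μ₁ μ₂ ν₁ ν₂ μ ν : Distr (PE Act),
      R μ₁ ν₁ → R μ₂ ν₂ → IsMix r μ₁ μ₂ μ → IsMix r ν₁ ν₂ ν → R μ ν)
    (htrans : ∀ (E F : PE Act) (α : Act) (μ' : Distr (PE Act)),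
      R (Distr.dirac E) (Distr.dirac F) → pstep E α μ' →
      ∃ ν', dstep (Distr.dirac F) α ν' ∧ R μ' ν') :
    ∀ μ ν, R μ ν → sb μ ν :=
  fun _ _ hR => ⟨R, isStrongBisim_of_rel_dirac hsym hdec hconv htrans, hR⟩

end PBB
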